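/- arXiv:2601.08596 — 2 statements merged into one kernel-verified Lean document; each statement's English description precedes it below -/
import Mathlib

section
/- Let G be an undirected graph on p nodes with extended edge set 𝒱 = E ∪ {(i,i) : i ∈ V}. For any symmetric positive definite p×p matrix Σ, there exists at most one symmetric positive definite matrix Q with Q_{ij} = 0 for all (i,j) ∉ 𝒱 such that (Q⁻¹)_{ij} = Σ_{ij} for all (i,j) ∈ 𝒱. -/
/-!
If `Q` and `Q'` both solve the problem, then `D = Q - Q'` vanishes off `𝒱` while
`Q'⁻¹ - Q⁻¹ = Q'⁻¹ D Q⁻¹` vanishes on `𝒱`, so `tr (D Q'⁻¹ D Q⁻¹) = 0`. Writing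
`Q'⁻¹ = Cᴴ C` and `Q⁻¹ = Eᴴ E`, this trace is `‖C D Eᴴ‖²_F`, hence `C D Eᴴ = 0` and `D = 0`.
-/

open scoped MatrixOrder ComplexOrder

namespace Matrix

variable {n : Type*} [Fintype n]

theorem trace_mul_eq_zero_of_forall_mul_eq_zero {R : Type*} [NonUnitalNonAssocSemiring R]
    {A B : Matrix n n R} (h : ∀ i j, A i j * B j i = 0) : (A * B).trace = 0 :=
  Finset.sum_eq_zero fun i _ => Finset.sum_eq_zero fun j _ => h i j

theorem IsHermitian.eq_zero_of_trace_mul_mul_mul_eq_zero [DecidableEq n] {𝕜 : Type*} [RCLike 𝕜]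
    {A B D : Matrix n n 𝕜} (hD : D.IsHermitian) (hA : A.PosDef) (hB : B.PosDef)
    (h : (D * A * D * B).trace = 0) : D = 0 := by
  obtain ⟨C, rfl⟩ := CStarAlgebra.nonneg_iff_eq_star_mul_self.mp hA.posSemidef.nonneg
  obtain ⟨E, rfl⟩ := CStarAlgebra.nonneg_iff_eq_star_mul_self.mp hB.posSemidef.nonneg
  simp only [star_eq_conjTranspose] at h
  have hCDE : C * D * Eᴴ = 0 := by
    rw [← trace_conjTranspose_mul_self_eq_zero_iff, ← h]
    calc ((C * D * Eᴴ)ᴴ * (C * D * Eᴴ)).trace = (E * (D * Cᴴ * C * D * Eᴴ)).trace := by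
          simp only [conjTranspose_mul, conjTranspose_conjTranspose, hD.eq, Matrix.mul_assoc]
      _ = (D * (Cᴴ * C) * D * (Eᴴ * E)).trace := by
          rw [trace_mul_comm]; simp only [Matrix.mul_assoc]
  have hADB : Cᴴ * C * D * (Eᴴ * E) = 0 := by
    calc Cᴴ * C * D * (Eᴴ * E) = Cᴴ * (C * D * Eᴴ) * E := by simp only [Matrix.mul_assoc]
      _ = 0 := by rw [hCDE, Matrix.mul_zero, Matrix.zero_mul]
  exact hA.isUnit.mul_right_eq_zero.mp (hB.isUnit.mul_left_eq_zero.mp hADB)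

end Matrix

theorem pd_completion_unique_general {p : ℕ} (G : SimpleGraph (Fin p))
    (S Q Q' : Matrix (Fin p) (Fin p) ℝ)
    (hQ : Q.PosDef) (hQ' : Q'.PosDef)
    (hQzero : ∀ i j, ¬ (G.Adj i j ∨ i = j) → Q i j = 0)
    (hQ'zero : ∀ i j, ¬ (G.Adj i j ∨ i = j) → Q' i j = 0)
    (hQinv : ∀ i j, (G.Adj i j ∨ i = j) → Q⁻¹ i j = S i j)
    (hQ'inv : ∀ i j, (G.Adj i j ∨ i = j) → Q'⁻¹ i j = S i j) :
    Q = Q' := by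
  have hinv_sub : Q'⁻¹ - Q⁻¹ = Q'⁻¹ * (Q - Q') * Q⁻¹ :=
    Matrix.inv_sub_inv (by simp [hQ.isUnit, hQ'.isUnit])
  have htrace : ((Q - Q') * (Q'⁻¹ - Q⁻¹)).trace = 0 := by
    refine Matrix.trace_mul_eq_zero_of_forall_mul_eq_zero fun i j => ?_
    by_cases hij : G.Adj i j ∨ i = j
    · have hji : G.Adj j i ∨ j = i := hij.imp G.adj_symm Eq.symm
      simp [hQinv j i hji, hQ'inv j i hji]
    · simp [hQzero i j hij, hQ'zero i j hij]
  rw [hinv_sub, ← Matrix.mul_assoc, ← Matrix.mul_assoc] at htrace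
  exact sub_eq_zero.mp <|
    (hQ.isHermitian.sub hQ'.isHermitian).eq_zero_of_trace_mul_mul_mul_eq_zero hQ'.inv hQ.inv htrace

/-- Uniqueness part of the positive definite completion theorem (Grone et al., 1984):
for a graph `G` on `p` nodes with extended edge set `𝒱 = E ∪ {(i,i)}` and a symmetric
positive definite matrix `S`, there is at most one positive definite `Q` vanishing
outside `𝒱` whose inverse agrees with `S` on `𝒱`. -/
theorem pd_completion_unique {p : ℕ} (G : SimpleGraph (Fin p))
    (S Q Q' : Matrix (Fin p) (Fin p) ℝ)
    (hS : S.PosDef) (hQ : Q.PosDef) (hQ' : Q'.PosDef)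
    (hQzero : ∀ i j, ¬ (G.Adj i j ∨ i = j) → Q i j = 0)
    (hQ'zero : ∀ i j, ¬ (G.Adj i j ∨ i = j) → Q' i j = 0)
    (hQinv : ∀ i j, (G.Adj i j ∨ i = j) → Q⁻¹ i j = S i j)
    (hQ'inv : ∀ i j, (G.Adj i j ∨ i = j) → Q'⁻¹ i j = S i j) :
    Q = Q' :=
  pd_completion_unique_general G S Q Q' hQ hQ' hQzero hQ'zero hQinv hQ'inv
end

section
/- The Wishart density: for δ > 2 and D ∈ ℙ, the function S ↦ |S|^{(δ−2)/2} exp(−(1/2) tr(S D)) is integrable over the cone ℙ of symmetric positive definite p×p matrices (with respect to Lebesgue measure on the p(p+1)/2 free entries), so the Wishart normalizing constant I_p(δ, D) is finite. -/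
open MeasureTheory Matrix

/-- The free entries (upper triangle including the diagonal) of a symmetric `p × p`
matrix. -/
abbrev FreeIdx (p : ℕ) := {q : Fin p × Fin p // q.1 ≤ q.2}

/-- The symmetric matrix determined by its free entries. -/
def toSym {p : ℕ} (v : FreeIdx p → ℝ) : Matrix (Fin p) (Fin p) ℝ :=
  fun i j => if h : i ≤ j then v ⟨(i, j), h⟩ else v ⟨(j, i), le_of_not_ge h⟩

/-!
Write `t = tr S` for `S` in the cone. Every eigenvalue of `S` is at most `t`, so `det S ≤ t ^ p`;
if `D - ε • 1` is positive semidefinite with `ε > 0` then `tr (S D) ≥ ε t`; and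
`2 |S i j| ≤ S i i + S j j` bounds every free entry by `t`. So the kernel is at most
`t ^ (p (δ - 2) / 2) * exp (-ε t / 2)`, which decays faster than any power of `1 + t ≥ 1 + ‖v‖`;
it is therefore dominated by `C * (1 + ‖v‖) ^ (-r)` with `r > p (p + 1) / 2`, which is integrable.
-/

open Real

section
variable {n : Type*} [Fintype n]

theorem Matrix.PosSemidef.two_mul_abs_apply_le {S : Matrix n n ℝ} (hS : S.PosSemidef) (i j : n) :
    2 * |S i j| ≤ S i i + S j j := by
  classical
  have hsym : S j i = S i j := by simpa using congrFun (congrFun hS.1 i) j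
  have hadd := hS.dotProduct_mulVec_nonneg (Pi.single i 1 + Pi.single j 1)
  have hsub := hS.dotProduct_mulVec_nonneg (Pi.single i 1 - Pi.single j 1)
  simp only [mulVec_add, mulVec_sub, add_dotProduct, dotProduct_add, sub_dotProduct,
    dotProduct_sub, mulVec_single_one, single_one_dotProduct, star_trivial, col_apply,
    hsym] at hadd hsub
  rcases abs_cases (S i j) with ⟨h, -⟩ | ⟨h, -⟩ <;> rw [h] <;> linarith

theorem Matrix.PosSemidef.abs_apply_le_trace {S : Matrix n n ℝ} (hS : S.PosSemidef) (i j : n) :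
    |S i j| ≤ S.trace := by
  have hdiag_le : ∀ k, S k k ≤ S.trace := fun k =>
    Finset.single_le_sum (f := fun k => S k k) (fun _ _ => hS.diag_nonneg) (Finset.mem_univ k)
  linarith [hS.two_mul_abs_apply_le i j, hdiag_le i, hdiag_le j]

variable [DecidableEq n]

theorem Matrix.PosSemidef.det_le_trace_pow {S : Matrix n n ℝ} (hS : S.PosSemidef) :
    S.det ≤ S.trace ^ Fintype.card n := by
  have heig_le : ∀ i, hS.1.eigenvalues i ≤ S.trace := fun i => by
    rw [hS.1.trace_eq_sum_eigenvalues]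
    exact Finset.single_le_sum (fun j _ => hS.eigenvalues_nonneg j) (Finset.mem_univ i)
  rw [hS.1.det_eq_prod_eigenvalues, ← Finset.card_univ, ← Finset.prod_const]
  exact Finset.prod_le_prod (fun i _ => hS.eigenvalues_nonneg i) fun i _ => heig_le i

open scoped MatrixOrder in
theorem Matrix.PosSemidef.trace_mul_nonneg {A B : Matrix n n ℝ} (hA : A.PosSemidef)
    (hB : B.PosSemidef) : 0 ≤ (A * B).trace := by
  obtain ⟨X, rfl⟩ := CStarAlgebra.nonneg_iff_eq_star_mul_self.mp hA.nonneg
  rw [mul_assoc, trace_mul_comm]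
  exact (hB.mul_mul_conjTranspose_same X).trace_nonneg

open scoped MatrixOrder in
theorem Matrix.PosDef.exists_pos_posSemidef_sub_smul_one {D : Matrix n n ℝ} (hD : D.PosDef) :
    ∃ ε : ℝ, 0 < ε ∧ (D - ε • 1).PosSemidef := by
  cases subsingleton_or_nontrivial (Matrix n n ℝ)
  · exact ⟨1, one_pos, Subsingleton.elim (0 : Matrix n n ℝ) (D - (1 : ℝ) • 1) ▸ .zero⟩
  obtain ⟨ε, hε, hle⟩ := (CFC.exists_pos_algebraMap_le_iff hD.isHermitian.isSelfAdjoint).2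
    fun x hx => (isStrictlyPositive_iff_posDef.2 hD).spectrum_pos hx
  exact ⟨ε, hε, by rwa [Algebra.algebraMap_eq_smul_one] at hle⟩

theorem Matrix.PosSemidef.det_rpow_mul_exp_neg_trace_mul_le {S D : Matrix n n ℝ}
    (hS : S.PosSemidef) {ε α : ℝ} (hDε : (D - ε • 1).PosSemidef) (hα : 0 ≤ α) :
    S.det ^ α * exp (-(1 / 2) * (S * D).trace) ≤
      S.trace ^ (Fintype.card n * α) * exp (-(ε / 2 * S.trace)) := by
  have htrace : ε * S.trace ≤ (S * D).trace := by
    have := hS.trace_mul_nonneg hDε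
    rwa [Matrix.mul_sub, trace_sub, Matrix.mul_smul, mul_one, trace_smul, smul_eq_mul,
      sub_nonneg] at this
  have hdet : S.det ^ α ≤ S.trace ^ (Fintype.card n * α) := by
    rw [rpow_mul hS.trace_nonneg, rpow_natCast]
    exact rpow_le_rpow hS.det_nonneg hS.det_le_trace_pow hα
  exact mul_le_mul hdet (exp_le_exp.2 (by linarith)) (exp_pos _).le (rpow_nonneg hS.trace_nonneg _)

end

theorem Real.rpow_mul_exp_neg_le_mul_one_add_rpow_neg {a β r t : ℝ} (ha : 0 < a) (hβ : 0 ≤ β)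
    (hr : 0 ≤ r) (ht : 0 ≤ t) :
    t ^ β * exp (-(a * t)) ≤ ((β + r) / a) ^ (β + r) * exp a * (1 + t) ^ (-r) := by
  have h1t : 0 < 1 + t := by linarith
  have hpow : (1 + t) ^ (β + r) ≤ ((β + r) / a) ^ (β + r) * exp (a * (1 + t)) := by
    simpa [abs_of_pos ha, abs_of_pos h1t] using
      ProbabilityTheory.rpow_abs_le_mul_exp_abs (1 + t) (add_nonneg hβ hr) ha.ne'
  have hsplit : (1 + t) ^ β = (1 + t) ^ (β + r) * (1 + t) ^ (-r) := by
    rw [← rpow_add h1t, add_neg_cancel_right]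
  have hexp : exp (a * (1 + t)) * exp (-(a * t)) = exp a := by
    rw [← exp_add]; ring_nf
  calc t ^ β * exp (-(a * t)) ≤ (1 + t) ^ β * exp (-(a * t)) := by gcongr; linarith
    _ = (1 + t) ^ (β + r) * exp (-(a * t)) * (1 + t) ^ (-r) := by rw [hsplit]; ring
    _ ≤ ((β + r) / a) ^ (β + r) * exp (a * (1 + t)) * exp (-(a * t)) * (1 + t) ^ (-r) := by
        gcongr
    _ = ((β + r) / a) ^ (β + r) * exp a * (1 + t) ^ (-r) := by rw [← hexp]; ring

theorem norm_le_trace_toSym {p : ℕ} {v : FreeIdx p → ℝ} (hv : (toSym v).PosSemidef) :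
    ‖v‖ ≤ (toSym v).trace :=
  (pi_norm_le_iff_of_nonneg hv.trace_nonneg).2 fun q => by
    simpa [toSym, q.2] using hv.abs_apply_le_trace q.1.1 q.1.2

/-- For `δ > 2` and `D ∈ ℙ`, the Wishart kernel
`S ↦ |S|^{(δ−2)/2} exp(−(1/2) tr(S D))` is integrable over the cone of symmetric
positive definite `p × p` matrices with respect to Lebesgue measure on the
`p(p+1)/2` free entries, so the Wishart normalizing constant `I_p(δ, D)` is finite. -/
theorem wishart_normalizing_constant_finite {p : ℕ} (δ : ℝ) (hδ : 2 < δ)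
    (D : Matrix (Fin p) (Fin p) ℝ) (hD : D.PosDef) :
    ∫⁻ v in {v : FreeIdx p → ℝ | (toSym v).PosDef},
      ENNReal.ofReal ((toSym v).det ^ ((δ - 2) / 2) *
        Real.exp (-(1 / 2 : ℝ) * (toSym v * D).trace)) < ⊤ := by
  obtain ⟨ε, hε, hDε⟩ := hD.exists_pos_posSemidef_sub_smul_one
  have hα : 0 ≤ (δ - 2) / 2 := by linarith
  set β : ℝ := p * ((δ - 2) / 2)
  set r : ℝ := Fintype.card (FreeIdx p) + 1
  have hr : 0 ≤ r := by positivity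
  set C : ℝ := ((β + r) / (ε / 2)) ^ (β + r) * exp (ε / 2)
  have hbound : ∀ v ∈ {v : FreeIdx p → ℝ | (toSym v).PosDef},
      ENNReal.ofReal ((toSym v).det ^ ((δ - 2) / 2) *
          exp (-(1 / 2 : ℝ) * (toSym v * D).trace)) ≤
        ENNReal.ofReal (C * (1 + ‖v‖) ^ (-r)) := fun v hv => by
    have hS : (toSym v).PosSemidef := hv.posSemidef
    refine ENNReal.ofReal_le_ofReal ?_
    calc _ ≤ (toSym v).trace ^ β * exp (-(ε / 2 * (toSym v).trace)) := by
          simpa using hS.det_rpow_mul_exp_neg_trace_mul_le hDε hα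
      _ ≤ C * (1 + (toSym v).trace) ^ (-r) :=
          rpow_mul_exp_neg_le_mul_one_add_rpow_neg (half_pos hε) (by positivity) hr
            hS.trace_nonneg
      _ ≤ C * (1 + ‖v‖) ^ (-r) := mul_le_mul_of_nonneg_left (rpow_le_rpow_of_nonpos
            (by positivity) (by linarith [norm_le_trace_toSym hS]) (neg_nonpos.2 hr))
            (by positivity)
  have hint : Integrable fun v : FreeIdx p → ℝ => C * (1 + ‖v‖) ^ (-r) :=
    (integrable_one_add_norm (E := FreeIdx p → ℝ) (μ := volume)
      (by simp [r, Module.finrank_fintype_fun_eq_card])).const_mul C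
  calc _ ≤ ∫⁻ v in {v : FreeIdx p → ℝ | (toSym v).PosDef},
          ENNReal.ofReal (C * (1 + ‖v‖) ^ (-r)) := setLIntegral_mono (by fun_prop) hbound
    _ ≤ ∫⁻ v, ENNReal.ofReal (C * (1 + ‖v‖) ^ (-r)) := setLIntegral_le_lintegral _ _
    _ < ⊤ := hint.lintegral_lt_top
end
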